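/- arXiv:1909.09810 — 2 statements merged into one kernel-verified Lean document; each statement's English description precedes it below -/
import Mathlib

section
/- Let V₁, V₂, V₃, V₄ ∈ ℝ² and assume the projected quadrilateral is concave with δ₁ of different sign from δ₂, δ₃, δ₄, i.e. δ₂·δ₃ > 0, δ₃·δ₄ > 0 and δ₁·δ₂ < 0. If either [det(V₁,V₂)·det(V₂,V₃) < 0 and det(V₃,V₄)·det(V₄,V₁) > 0] (crossed subregion) or [det(V₂,V₃)·det(V₃,V₄) > 0 and det(V₄,V₁)·det(V₁,V₂) > 0] (convex subregion), then there exists exactly one point (s,t) ∈ (0,1) × (0,1) with G(s,t) = (0,0); i.e., a unique sliding vector field is defined on the codimension-2 discontinuity Λ. -/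
/-!
Write `G(s,t) = t • G(s,1) + (1 - t) • G(s,0)`. For `t ∈ (0,1)`, `G(s,t) = 0` forces
`Q(s) := det(G(s,0), G(s,1)) = 0`, a quadratic with `Q(1) = det(V₄,V₁)`, and then determines `t`
uniquely; this `t` lies in `(0,1)` exactly when `det(G(s,1), V₃) > 0`, i.e. for `s` beyond a
threshold `σ`. After swapping coordinates (which negates all determinants) we may take `δ₁ < 0`;
the sign hypotheses then give `det(V₃,V₄), det(V₄,V₁) > 0` and `Q(σ) < 0`. So `Q` has a root in
`(σ, 1)` by the intermediate value theorem, and only one, since a quadratic that is negative at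
`σ` and positive at `1` cannot vanish twice in between.
-/

/-- Determinant of two vectors in ℝ². -/
noncomputable def det2 (U W : ℝ × ℝ) : ℝ := U.1 * W.2 - U.2 * W.1

/-- The canopy bilinear map G(s,t) = st·V₁ + (1-s)t·V₂ + (1-s)(1-t)·V₃ + s(1-t)·V₄. -/
noncomputable def Gmap (V₁ V₂ V₃ V₄ : ℝ × ℝ) (s t : ℝ) : ℝ × ℝ :=
  (s * t) • V₁ + ((1 - s) * t) • V₂ + ((1 - s) * (1 - t)) • V₃ + (s * (1 - t)) • V₄

open Set

lemma det2_anticomm (U W : ℝ × ℝ) : det2 U W = -det2 W U := by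
  simp only [det2]; ring

lemma det2_swap (U W : ℝ × ℝ) : det2 U.swap W.swap = -det2 U W := by
  simp only [det2, Prod.fst_swap, Prod.snd_swap]; ring

lemma det2_sub_sub (U V W : ℝ × ℝ) : det2 (V - U) (W - V) = det2 U V + det2 V W - det2 U W := by
  simp only [det2, Prod.fst_sub, Prod.snd_sub]; ring

lemma det2_mul_det2 (V₁ V₂ V₃ V₄ : ℝ × ℝ) :
    det2 V₁ V₃ * det2 V₂ V₄ = det2 V₁ V₂ * det2 V₃ V₄ - det2 V₂ V₃ * det2 V₄ V₁ := by
  simp only [det2]; ring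

lemma eq_zero_iff_det2_eq_zero {R W X : ℝ × ℝ} (h : det2 R W ≠ 0) :
    X = 0 ↔ det2 R X = 0 ∧ det2 X W = 0 := by
  refine ⟨by rintro rfl; simp [det2], fun ⟨hR, hW⟩ => ?_⟩
  -- Cramer's rule: `det2 R W • X = det2 X W • R + det2 R X • W`
  ext <;> apply mul_left_cancel₀ h <;>
    simp only [det2, Prod.fst_zero, Prod.snd_zero, mul_zero] at hR hW ⊢
  · linear_combination R.1 * hW + W.1 * hR
  · linear_combination R.2 * hW + W.2 * hR

lemma Gmap_swap (V₁ V₂ V₃ V₄ : ℝ × ℝ) (s t : ℝ) :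
    Gmap V₁.swap V₂.swap V₃.swap V₄.swap s t = (Gmap V₁ V₂ V₃ V₄ s t).swap := by
  simp only [Gmap, Prod.swap_add, Prod.smul_swap]

lemma Gmap_eq_zero_iff {V₁ V₂ V₃ V₄ : ℝ × ℝ} {s t : ℝ} (hs : s ≠ 0) (ht : t ≠ 0)
    (hc : det2 V₃ V₄ ≠ 0) :
    Gmap V₁ V₂ V₃ V₄ s t = 0 ↔ det2 (Gmap V₁ V₂ V₃ V₄ s 0) (Gmap V₁ V₂ V₃ V₄ s 1) = 0 ∧
      t * det2 (Gmap V₁ V₂ V₃ V₄ s 1) V₃ = (1 - t) * (s * det2 V₃ V₄) := by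
  have hR : det2 (Gmap V₁ V₂ V₃ V₄ s 0) V₃ = -(s * det2 V₃ V₄) := by
    simp only [Gmap, det2, Prod.fst_add, Prod.snd_add, Prod.smul_fst, Prod.smul_snd, smul_eq_mul]
    ring
  have hRX : det2 (Gmap V₁ V₂ V₃ V₄ s 0) (Gmap V₁ V₂ V₃ V₄ s t) =
      t * det2 (Gmap V₁ V₂ V₃ V₄ s 0) (Gmap V₁ V₂ V₃ V₄ s 1) := by
    simp only [Gmap, det2, Prod.fst_add, Prod.snd_add, Prod.smul_fst, Prod.smul_snd, smul_eq_mul]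
    ring
  have hXW : det2 (Gmap V₁ V₂ V₃ V₄ s t) V₃ =
      t * det2 (Gmap V₁ V₂ V₃ V₄ s 1) V₃ - (1 - t) * (s * det2 V₃ V₄) := by
    simp only [Gmap, det2, Prod.fst_add, Prod.snd_add, Prod.smul_fst, Prod.smul_snd, smul_eq_mul]
    ring
  rw [eq_zero_iff_det2_eq_zero (hR ▸ neg_ne_zero.mpr (mul_ne_zero hs hc)), hRX, hXW,
    mul_eq_zero, or_iff_right ht, sub_eq_zero]

lemma det2_Gmap_zero_Gmap_one (V₁ V₂ V₃ V₄ : ℝ × ℝ) (s : ℝ) :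
    det2 (Gmap V₁ V₂ V₃ V₄ s 0) (Gmap V₁ V₂ V₃ V₄ s 1) = det2 V₄ V₁ * s ^ 2 -
      (det2 V₁ V₃ + det2 V₂ V₄) * (s * (1 - s)) - det2 V₂ V₃ * (1 - s) ^ 2 := by
  simp only [Gmap, det2, Prod.fst_add, Prod.snd_add, Prod.smul_fst, Prod.smul_snd, smul_eq_mul]
  ring

lemma det2_Gmap_one (V₁ V₂ V₃ V₄ : ℝ × ℝ) (s : ℝ) :
    det2 (Gmap V₁ V₂ V₃ V₄ s 1) V₃ = det2 V₁ V₃ * s + det2 V₂ V₃ * (1 - s) := by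
  simp only [Gmap, det2, Prod.fst_add, Prod.snd_add, Prod.smul_fst, Prod.smul_snd, smul_eq_mul]
  ring

lemma eq_of_quadratic_eq_zero {q : ℝ → ℝ} {α β γ u v x y : ℝ}
    (hq : ∀ s, q s = α * s ^ 2 + β * s + γ) (hu : q u < 0) (hv : 0 < q v)
    (hx : x ∈ Ioo u v) (hy : y ∈ Ioo u v) (hqx : q x = 0) (hqy : q y = 0) : x = y := by
  by_contra hxy
  rw [hq] at hu hv hqx hqy
  have hβ : β = -(α * (x + y)) := by
    have h : (x - y) * (α * (x + y) + β) = 0 := by linear_combination hqx - hqy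
    linear_combination (mul_eq_zero.mp h).resolve_left (sub_ne_zero.mpr hxy)
  have hγ : γ = α * (x * y) := by linear_combination hqx - x * hβ
  subst hβ hγ
  -- `q = α (s - x) (s - y)` has the sign of `α` at both `u` and `v`
  have hsign : (α * u ^ 2 + -(α * (x + y)) * u + α * (x * y)) *
      (α * v ^ 2 + -(α * (x + y)) * v + α * (x * y)) =
      α ^ 2 * ((x - u) * (v - x) * ((y - u) * (v - y))) := by ring
  have hpos : 0 < (x - u) * (v - x) * ((y - u) * (v - y)) :=
    mul_pos (mul_pos (sub_pos.2 hx.1) (sub_pos.2 hx.2)) (mul_pos (sub_pos.2 hy.1) (sub_pos.2 hy.2))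
  nlinarith [mul_neg_of_neg_of_pos hu hv, mul_nonneg (sq_nonneg α) hpos.le]

lemma existsUnique_root_of_threshold {q φ : ℝ → ℝ} {A B C σ : ℝ}
    (hq : ∀ s, q s = A * s ^ 2 - B * (s * (1 - s)) - C * (1 - s) ^ 2) (hA : 0 < A)
    (hσ : σ ∈ Ico (0 : ℝ) 1) (hqσ : q σ < 0) (hφ : ∀ s ∈ Ioo (0 : ℝ) 1, 0 < φ s ↔ σ < s) :
    ∃! s, s ∈ Ioo (0 : ℝ) 1 ∧ 0 < φ s ∧ q s = 0 := by
  have hq' : ∀ s, q s = (A + B - C) * s ^ 2 + (2 * C - B) * s + -C := fun s => by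
    rw [hq]; ring
  have hq₁ : 0 < q 1 := by simpa [hq] using hA
  have hcont : Continuous q := by rw [funext hq]; fun_prop
  obtain ⟨s₀, ⟨hσs₀, hs₀⟩, hqs₀⟩ :=
    intermediate_value_Ioo hσ.2.le hcont.continuousOn ⟨hqσ, hq₁⟩
  have hs₀' : s₀ ∈ Ioo (0 : ℝ) 1 := ⟨hσ.1.trans_lt hσs₀, hs₀⟩
  refine ⟨s₀, ⟨hs₀', (hφ s₀ hs₀').2 hσs₀, hqs₀⟩, fun s ⟨hs, hφs, hqs⟩ => ?_⟩
  exact eq_of_quadratic_eq_zero hq' hqσ hq₁ ⟨(hφ s hs).1 hφs, hs.2⟩ ⟨hσs₀, hs₀⟩ hqs hqs₀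

lemma existsUnique_mul_eq_one_sub_mul {x k : ℝ} (hx : 0 < x) (hk : 0 < k) :
    ∃! t, t ∈ Ioo (0 : ℝ) 1 ∧ t * x = (1 - t) * k := by
  have hxk : 0 < x + k := by linarith
  refine ⟨k / (x + k), ⟨⟨by positivity, by rw [div_lt_one hxk]; linarith⟩, ?_⟩, ?_⟩
  · field_simp; ring
  · rintro t ⟨-, ht⟩
    rw [eq_div_iff hxk.ne']
    linear_combination ht

lemma pos_of_mul_eq_one_sub_mul {t x k : ℝ} (ht : t ∈ Ioo (0 : ℝ) 1) (hk : 0 < k)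
    (h : t * x = (1 - t) * k) : 0 < x :=
  pos_of_mul_pos_right (h ▸ mul_pos (sub_pos.mpr ht.2) hk) ht.1.le

lemma signs_of_mul_neg_of_mul_pos {x₁ x₂ x₃ x₄ : ℝ} (h₁₂ : x₁ * x₂ < 0) (h₂₃ : 0 < x₂ * x₃)
    (h₃₄ : 0 < x₃ * x₄) :
    (x₁ < 0 ∧ 0 < x₂ ∧ 0 < x₃ ∧ 0 < x₄) ∨ (0 < x₁ ∧ x₂ < 0 ∧ x₃ < 0 ∧ x₄ < 0) := by
  rcases mul_neg_iff.mp h₁₂ with ⟨h₁, h₂⟩ | ⟨h₁, h₂⟩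
  · have h₃ := neg_of_mul_pos_right h₂₃ h₂.le
    exact Or.inr ⟨h₁, h₂, h₃, neg_of_mul_pos_right h₃₄ h₃.le⟩
  · have h₃ := pos_of_mul_pos_right h₂₃ h₂.le
    exact Or.inl ⟨h₁, h₂, h₃, pos_of_mul_pos_right h₃₄ h₃.le⟩

-- With `a, b, c, d = det(V₁,V₂), det(V₂,V₃), det(V₃,V₄), det(V₄,V₁)`, `e = det(V₁,V₃)` and
-- `f = det(V₂,V₄)`: `δ₁ = a + b - e`, `δ₂ = b + c - f`, `δ₄ = d + a + f`, and `hplucker` is the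
-- Plücker relation.
lemma canopy_signs {a b c d e f : ℝ} (hplucker : e * f = a * c - b * d)
    (h₁ : a + b - e < 0) (h₂ : 0 < b + c - f) (h₄ : 0 < d + a + f)
    (hcond : (a * b < 0 ∧ 0 < c * d) ∨ (0 < b * c ∧ 0 < d * a)) :
    0 < c ∧ 0 < d ∧ 0 < e ∧ (0 < b ∨ b < 0 ∧ 0 < a) := by
  have hA : ¬(0 < a ∧ b < 0 ∧ c < 0) := fun ⟨ha, hb, hc⟩ => by nlinarith
  have hB : ¬(a < 0 ∧ 0 < b ∧ d < 0) := fun ⟨ha, hb, hd⟩ => by nlinarith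
  rcases hcond with ⟨hab, hcd⟩ | ⟨hbc, hda⟩
  · obtain ⟨hc, hd⟩ : 0 < c ∧ 0 < d := by
      refine (mul_pos_iff.mp hcd).resolve_right fun ⟨hc, hd⟩ => ?_
      rcases mul_neg_iff.mp hab with ⟨ha, hb⟩ | ⟨ha, hb⟩
      exacts [hA ⟨ha, hb, hc⟩, hB ⟨ha, hb, hd⟩]
    rcases mul_neg_iff.mp hab with ⟨ha, hb⟩ | ⟨ha, hb⟩
    · exact ⟨hc, hd, by nlinarith, Or.inr ⟨hb, ha⟩⟩
    · exact ⟨hc, hd, by nlinarith, Or.inl hb⟩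
  · rcases mul_pos_iff.mp hbc with ⟨hb, hc⟩ | ⟨hb, hc⟩ <;>
      rcases mul_pos_iff.mp hda with ⟨hd, ha⟩ | ⟨hd, ha⟩
    · exact ⟨hc, hd, by linarith, Or.inl hb⟩
    · exact absurd ⟨ha, hb, hd⟩ hB
    · exact absurd ⟨ha, hb, hc⟩ hA
    · linarith

lemma exists_threshold {a b c d e f : ℝ} (hplucker : e * f = a * c - b * d) (hc : 0 < c)
    (he : 0 < e) (hb : 0 < b ∨ b < 0 ∧ 0 < a) :
    ∃ σ ∈ Ico (0 : ℝ) 1, d * σ ^ 2 - (e + f) * (σ * (1 - σ)) - b * (1 - σ) ^ 2 < 0 ∧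
      ∀ s ∈ Ioo (0 : ℝ) 1, 0 < e * s + b * (1 - s) ↔ σ < s := by
  rcases hb with hb | ⟨hb, ha⟩
  · refine ⟨0, ⟨le_rfl, one_pos⟩, by linarith, fun s ⟨hs₀, hs₁⟩ => ?_⟩
    simp only [hs₀, iff_true]
    nlinarith
  · have heb : 0 < e - b := by linarith
    refine ⟨-b / (e - b), ⟨div_nonneg (by linarith) heb.le, by rw [div_lt_one heb]; linarith⟩,
      ?_, fun s _ => ?_⟩
    · -- at the zero σ of `e * s + b * (1 - s)`, the quadratic equals `a * b * c / (e - b) ^ 2`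
      have hval : (d * (-b / (e - b)) ^ 2 - (e + f) * (-b / (e - b) * (1 - -b / (e - b)))
          - b * (1 - -b / (e - b)) ^ 2) * (e - b) ^ 2 = a * b * c := by
        field_simp
        linear_combination b * hplucker
      have habc : a * b * c < 0 := by nlinarith [mul_pos ha hc]
      nlinarith [pow_pos heb 2]
    · rw [div_lt_iff₀ heb]
      constructor <;> intro h <;> linarith

theorem existsUnique_Gmap_eq_zero_of_threshold (V₁ V₂ V₃ V₄ : ℝ × ℝ) {σ : ℝ}
    (hσ : σ ∈ Ico (0 : ℝ) 1) (hc : 0 < det2 V₃ V₄) (hd : 0 < det2 V₄ V₁)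
    (hQσ : det2 (Gmap V₁ V₂ V₃ V₄ σ 0) (Gmap V₁ V₂ V₃ V₄ σ 1) < 0)
    (hφ : ∀ s ∈ Ioo (0 : ℝ) 1, 0 < det2 (Gmap V₁ V₂ V₃ V₄ s 1) V₃ ↔ σ < s) :
    ∃! p : ℝ × ℝ, p.1 ∈ Ioo (0 : ℝ) 1 ∧ p.2 ∈ Ioo (0 : ℝ) 1 ∧ Gmap V₁ V₂ V₃ V₄ p.1 p.2 = 0 := by
  obtain ⟨s₀, ⟨hs₀, hφs₀, hQs₀⟩, hs₀_unique⟩ :=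
    existsUnique_root_of_threshold (det2_Gmap_zero_Gmap_one V₁ V₂ V₃ V₄) hd hσ hQσ hφ
  obtain ⟨t₀, ⟨ht₀, hts₀⟩, ht₀_unique⟩ := existsUnique_mul_eq_one_sub_mul hφs₀ (mul_pos hs₀.1 hc)
  refine ⟨(s₀, t₀), ⟨hs₀, ht₀, (Gmap_eq_zero_iff hs₀.1.ne' ht₀.1.ne' hc.ne').2 ⟨hQs₀, hts₀⟩⟩, ?_⟩
  rintro ⟨s, t⟩ ⟨hs, ht, hG⟩
  obtain ⟨hQs, hts⟩ := (Gmap_eq_zero_iff hs.1.ne' ht.1.ne' hc.ne').1 hG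
  obtain rfl : s = s₀ :=
    hs₀_unique s ⟨hs, pos_of_mul_eq_one_sub_mul ht (mul_pos hs.1 hc) hts, hQs⟩
  rw [ht₀_unique t ⟨ht, hts⟩]

theorem existsUnique_Gmap_eq_zero_of_neg_of_pos (V₁ V₂ V₃ V₄ : ℝ × ℝ)
    (hδ₁ : det2 (V₂ - V₁) (V₃ - V₂) < 0) (hδ₂ : 0 < det2 (V₃ - V₂) (V₄ - V₃))
    (hδ₄ : 0 < det2 (V₁ - V₄) (V₂ - V₁))
    (hcond : (det2 V₁ V₂ * det2 V₂ V₃ < 0 ∧ 0 < det2 V₃ V₄ * det2 V₄ V₁) ∨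
             (0 < det2 V₂ V₃ * det2 V₃ V₄ ∧ 0 < det2 V₄ V₁ * det2 V₁ V₂)) :
    ∃! p : ℝ × ℝ, p.1 ∈ Ioo (0 : ℝ) 1 ∧ p.2 ∈ Ioo (0 : ℝ) 1 ∧ Gmap V₁ V₂ V₃ V₄ p.1 p.2 = 0 := by
  rw [det2_sub_sub] at hδ₁ hδ₂ hδ₄
  rw [det2_anticomm V₄ V₂] at hδ₄
  obtain ⟨hc, hd, he, hb⟩ := canopy_signs (det2_mul_det2 V₁ V₂ V₃ V₄) hδ₁ hδ₂
    (by linarith) hcond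
  obtain ⟨σ, hσ, hQσ, hφ⟩ := exists_threshold (det2_mul_det2 V₁ V₂ V₃ V₄) hc he hb
  refine existsUnique_Gmap_eq_zero_of_threshold V₁ V₂ V₃ V₄ hσ hc hd ?_ ?_
  · rwa [det2_Gmap_zero_Gmap_one]
  · simpa only [det2_Gmap_one] using hφ

/-- Concave case with δ₁ of different sign from δ₂, δ₃, δ₄: in the crossed subregion
(det(V₁,V₂)·det(V₂,V₃) < 0 and det(V₃,V₄)·det(V₄,V₁) > 0) or in the convex subregion
(det(V₂,V₃)·det(V₃,V₄) > 0 and det(V₄,V₁)·det(V₁,V₂) > 0), the canopy map has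
exactly one zero in (0,1)², i.e. a unique sliding vector field on Λ. -/
theorem stmt13 (V₁ V₂ V₃ V₄ : ℝ × ℝ) (χ₁ χ₂ χ₃ χ₄ : ℝ × ℝ) (δ₁ δ₂ δ₃ δ₄ : ℝ)
    (hχ₁ : χ₁ = V₂ - V₁) (hχ₂ : χ₂ = V₃ - V₂) (hχ₃ : χ₃ = V₄ - V₃) (hχ₄ : χ₄ = V₁ - V₄)
    (hδ₁ : δ₁ = det2 χ₁ χ₂) (hδ₂ : δ₂ = det2 χ₂ χ₃)
    (hδ₃ : δ₃ = det2 χ₃ χ₄) (hδ₄ : δ₄ = det2 χ₄ χ₁)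
    (hcv₁ : 0 < δ₂ * δ₃) (hcv₂ : 0 < δ₃ * δ₄) (hcv₃ : δ₁ * δ₂ < 0)
    (hcond : (det2 V₁ V₂ * det2 V₂ V₃ < 0 ∧ 0 < det2 V₃ V₄ * det2 V₄ V₁) ∨
             (0 < det2 V₂ V₃ * det2 V₃ V₄ ∧ 0 < det2 V₄ V₁ * det2 V₁ V₂)) :
    ∃! p : ℝ × ℝ, p.1 ∈ Set.Ioo (0 : ℝ) 1 ∧ p.2 ∈ Set.Ioo (0 : ℝ) 1 ∧
      Gmap V₁ V₂ V₃ V₄ p.1 p.2 = 0 := by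
  subst hχ₁ hχ₂ hχ₃ hχ₄ hδ₁ hδ₂ hδ₃ hδ₄
  rcases signs_of_mul_neg_of_mul_pos hcv₃ hcv₁ hcv₂ with
    ⟨h₁, h₂, -, h₄⟩ | ⟨h₁, h₂, -, h₄⟩
  · exact existsUnique_Gmap_eq_zero_of_neg_of_pos V₁ V₂ V₃ V₄ h₁ h₂ h₄ hcond
  · have h := existsUnique_Gmap_eq_zero_of_neg_of_pos V₁.swap V₂.swap V₃.swap V₄.swap
      (by simpa [← Prod.swap_sub, det2_swap] using h₁)
      (by simpa [← Prod.swap_sub, det2_swap] using h₂)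
      (by simpa [← Prod.swap_sub, det2_swap] using h₄)
      (by simpa [det2_swap] using hcond)
    simpa [Gmap_swap, Prod.swap_eq_iff_eq_swap] using h
end

section
/- Let V₁, V₂, V₃, V₄ ∈ ℝ² with A + Γ − B ≠ 0, and suppose (s₁,t₁) and (s₂,t₂) are points of (0,1) × (0,1) with G(s₁,t₁) = G(s₂,t₂) = (0,0) and t₁ ≠ t₂. For j = 1, 2, let pⱼ, qⱼ > 0 and let Mⱼ be the real 2×2 matrix whose first column is pⱼ·u(sⱼ,tⱼ) and whose second column is qⱼ·v(sⱼ,tⱼ) (the linearization of the layer problem of the regularized system at the corresponding equilibrium, for an arbitrary choice of regularization functions). Then it is not the case that both M₁ and M₂ have all eigenvalues with negative real part; i.e., there exists at most one stable (attracting) sliding vector field on the codimension-2 discontinuity Λ. -/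
/-- ∂G/∂s = t·(V₁-V₂) + (1-t)·(V₄-V₃). -/
noncomputable def uvec (V₁ V₂ V₃ V₄ : ℝ × ℝ) (t : ℝ) : ℝ × ℝ :=
  t • (V₁ - V₂) + (1 - t) • (V₄ - V₃)

/-- ∂G/∂t = s·(V₁-V₄) + (1-s)·(V₂-V₃). -/
noncomputable def vvec (V₁ V₂ V₃ V₄ : ℝ × ℝ) (s : ℝ) : ℝ × ℝ :=
  s • (V₁ - V₄) + (1 - s) • (V₂ - V₃)

/-- A real 2×2 matrix has all eigenvalues with negative real part: every complex root
of its characteristic polynomial has negative real part. -/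
def AllEigRealPartNeg (M : Matrix (Fin 2) (Fin 2) ℝ) : Prop :=
  ∀ z : ℂ, (Polynomial.aeval z) M.charpoly = 0 → z.re < 0

/-!
At a zero `(s, t)` of `G` with `s ≠ 1`, the identity `G(s,t) = s • G(1,t) + (1 - s) • G(0,t)`
forces `G(1,t)` and `G(0,t)` to be parallel, so `t` is a root of the quadratic
`φ(t) = det(G(1,t), G(0,t)) = (A - B + Γ) t² + (B - 2Γ) t + Γ`. At a zero of `G` the Jacobian
determinant `det(u, v)` equals `φ'(t)`, and at two distinct roots of a quadratic the derivative
takes opposite values. Hence `det M₁` and `det M₂`, which are positive multiples of these, cannot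
both be positive, whereas a stable real `2 × 2` matrix has positive determinant
(otherwise its characteristic polynomial has a nonnegative real root).
-/

open Polynomial in
theorem det_pos_of_allEigRealPartNeg {M : Matrix (Fin 2) (Fin 2) ℝ}
    (h : AllEigRealPartNeg M) : 0 < M.det := by
  by_contra! hdet
  set r : ℝ := (M.trace + √(M.trace ^ 2 - 4 * M.det)) / 2 with hr
  have hsq : √(M.trace ^ 2 - 4 * M.det) ^ 2 = M.trace ^ 2 - 4 * M.det :=
    Real.sq_sqrt (by nlinarith [sq_nonneg M.trace])
  have habs : |M.trace| ≤ √(M.trace ^ 2 - 4 * M.det) := by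
    rw [← Real.sqrt_sq_eq_abs]; exact Real.sqrt_le_sqrt (by linarith)
  have hroot : M.charpoly.eval r = 0 := by
    simp only [M.charpoly_fin_two, eval_add, eval_sub, eval_mul, eval_pow, eval_X, eval_C]
    linear_combination hsq / 4
  have hneg := h r (by
    rw [← Complex.coe_algebraMap, aeval_algebraMap_apply_eq_algebraMap_eval, hroot, map_zero])
  rw [Complex.ofReal_re] at hneg
  linarith [neg_abs_le M.trace, hr]

theorem Matrix.det_fin_two_of_scaled_columns (p q : ℝ) (U W : ℝ × ℝ) :
    (!![p * U.1, q * W.1; p * U.2, q * W.2]).det = p * q * det2 U W := by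
  rw [Matrix.det_fin_two_of, det2]; ring

theorem two_mul_add_eq_neg_of_quadratic_roots {a b c x y : ℝ} (hx : a * x ^ 2 + b * x + c = 0)
    (hy : a * y ^ 2 + b * y + c = 0) (hxy : x ≠ y) : 2 * a * x + b = -(2 * a * y + b) := by
  have : (a * (x + y) + b) * (x - y) = 0 := by linear_combination hx - hy
  have := (mul_eq_zero.mp this).resolve_right (sub_ne_zero.mpr hxy)
  linear_combination 2 * this

theorem det2_zero_left (W : ℝ × ℝ) : det2 0 W = 0 := by simp [det2]

theorem det2_zero_right (U : ℝ × ℝ) : det2 U 0 = 0 := by simp [det2]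

section Canopy

variable (V₁ V₂ V₃ V₄ : ℝ × ℝ)

noncomputable def canopyA : ℝ := det2 V₁ V₂
noncomputable def canopyB : ℝ := det2 V₄ V₂ + det2 V₁ V₃
noncomputable def canopyΓ : ℝ := det2 V₄ V₃

theorem det2_Gmap_one_Gmap (s t : ℝ) :
    det2 (Gmap V₁ V₂ V₃ V₄ 1 t) (Gmap V₁ V₂ V₃ V₄ s t) = (1 - s) *
      ((canopyA V₁ V₂ - canopyB V₁ V₂ V₃ V₄ + canopyΓ V₃ V₄) * t ^ 2
        + (canopyB V₁ V₂ V₃ V₄ - 2 * canopyΓ V₃ V₄) * t + canopyΓ V₃ V₄) := by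
  simp only [det2, Gmap, canopyA, canopyB, canopyΓ, Prod.fst_add, Prod.snd_add, Prod.smul_fst,
    Prod.smul_snd, smul_eq_mul]
  ring

theorem det2_uvec_vvec (s t : ℝ) :
    det2 (uvec V₁ V₂ V₃ V₄ t) (vvec V₁ V₂ V₃ V₄ s) =
      2 * (canopyA V₁ V₂ - canopyB V₁ V₂ V₃ V₄ + canopyΓ V₃ V₄) * t
        + (canopyB V₁ V₂ V₃ V₄ - 2 * canopyΓ V₃ V₄)
        + det2 (Gmap V₁ V₂ V₃ V₄ s t) (V₁ - V₂ + V₃ - V₄) := by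
  simp only [det2, Gmap, uvec, vvec, canopyA, canopyB, canopyΓ, Prod.fst_add, Prod.snd_add,
    Prod.smul_fst, Prod.smul_snd, Prod.fst_sub, Prod.snd_sub, smul_eq_mul]
  ring

variable {V₁ V₂ V₃ V₄}

theorem quadratic_eq_zero_of_Gmap_eq_zero {s t : ℝ} (hG : Gmap V₁ V₂ V₃ V₄ s t = 0)
    (hs : s ≠ 1) :
    (canopyA V₁ V₂ - canopyB V₁ V₂ V₃ V₄ + canopyΓ V₃ V₄) * t ^ 2
      + (canopyB V₁ V₂ V₃ V₄ - 2 * canopyΓ V₃ V₄) * t + canopyΓ V₃ V₄ = 0 := by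
  have h := det2_Gmap_one_Gmap V₁ V₂ V₃ V₄ s t
  rw [hG, det2_zero_right, eq_comm] at h
  exact (mul_eq_zero.mp h).resolve_left (sub_ne_zero.mpr hs.symm)

theorem det2_uvec_vvec_of_Gmap_eq_zero {s t : ℝ} (hG : Gmap V₁ V₂ V₃ V₄ s t = 0) :
    det2 (uvec V₁ V₂ V₃ V₄ t) (vvec V₁ V₂ V₃ V₄ s) =
      2 * (canopyA V₁ V₂ - canopyB V₁ V₂ V₃ V₄ + canopyΓ V₃ V₄) * t
        + (canopyB V₁ V₂ V₃ V₄ - 2 * canopyΓ V₃ V₄) := by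
  rw [det2_uvec_vvec, hG, det2_zero_left, add_zero]

end Canopy

theorem stmt17_general (V₁ V₂ V₃ V₄ : ℝ × ℝ)
    (s₁ t₁ s₂ t₂ : ℝ)
    (hs₁ : s₁ ∈ Set.Ioo (0 : ℝ) 1)
    (hs₂ : s₂ ∈ Set.Ioo (0 : ℝ) 1)
    (hG₁ : Gmap V₁ V₂ V₃ V₄ s₁ t₁ = 0) (hG₂ : Gmap V₁ V₂ V₃ V₄ s₂ t₂ = 0)
    (htt : t₁ ≠ t₂)
    (p₁ q₁ p₂ q₂ : ℝ) (hp₁ : 0 < p₁) (hq₁ : 0 < q₁) (hp₂ : 0 < p₂) (hq₂ : 0 < q₂)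
    (M₁ M₂ : Matrix (Fin 2) (Fin 2) ℝ)
    (hM₁ : M₁ = !![p₁ * (uvec V₁ V₂ V₃ V₄ t₁).1, q₁ * (vvec V₁ V₂ V₃ V₄ s₁).1;
                   p₁ * (uvec V₁ V₂ V₃ V₄ t₁).2, q₁ * (vvec V₁ V₂ V₃ V₄ s₁).2])
    (hM₂ : M₂ = !![p₂ * (uvec V₁ V₂ V₃ V₄ t₂).1, q₂ * (vvec V₁ V₂ V₃ V₄ s₂).1;
                   p₂ * (uvec V₁ V₂ V₃ V₄ t₂).2, q₂ * (vvec V₁ V₂ V₃ V₄ s₂).2]) :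
    ¬(AllEigRealPartNeg M₁ ∧ AllEigRealPartNeg M₂) := by
  rintro ⟨H₁, H₂⟩
  have hJ : det2 (uvec V₁ V₂ V₃ V₄ t₁) (vvec V₁ V₂ V₃ V₄ s₁) =
      -det2 (uvec V₁ V₂ V₃ V₄ t₂) (vvec V₁ V₂ V₃ V₄ s₂) := by
    rw [det2_uvec_vvec_of_Gmap_eq_zero hG₁, det2_uvec_vvec_of_Gmap_eq_zero hG₂]
    exact two_mul_add_eq_neg_of_quadratic_roots (quadratic_eq_zero_of_Gmap_eq_zero hG₁ hs₁.2.ne)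
      (quadratic_eq_zero_of_Gmap_eq_zero hG₂ hs₂.2.ne) htt
  have hd₁ := det_pos_of_allEigRealPartNeg H₁
  have hd₂ := det_pos_of_allEigRealPartNeg H₂
  rw [hM₁, Matrix.det_fin_two_of_scaled_columns, hJ] at hd₁
  rw [hM₂, Matrix.det_fin_two_of_scaled_columns] at hd₂
  nlinarith [mul_pos hp₁ hq₁, mul_pos hp₂ hq₂]

/-- If A + Γ - B ≠ 0 and the canopy map has two zeros in (0,1)² with distinct
t-values, then the linearizations of the layer problem at the two corresponding
equilibria (with columns pⱼ·u(sⱼ,tⱼ) and qⱼ·v(sⱼ,tⱼ), pⱼ, qⱼ > 0 arbitrary,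
accounting for any choice of regularization functions) cannot both have all
eigenvalues with negative real part: at most one sliding vector field is stable. -/
theorem stmt17 (V₁ V₂ V₃ V₄ : ℝ × ℝ) (A B Γ : ℝ)
    (hA : A = det2 V₁ V₂) (hB : B = det2 V₄ V₂ + det2 V₁ V₃) (hΓ : Γ = det2 V₄ V₃)
    (hABΓ : A + Γ - B ≠ 0)
    (s₁ t₁ s₂ t₂ : ℝ)
    (hs₁ : s₁ ∈ Set.Ioo (0 : ℝ) 1) (ht₁ : t₁ ∈ Set.Ioo (0 : ℝ) 1)
    (hs₂ : s₂ ∈ Set.Ioo (0 : ℝ) 1) (ht₂ : t₂ ∈ Set.Ioo (0 : ℝ) 1)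
    (hG₁ : Gmap V₁ V₂ V₃ V₄ s₁ t₁ = 0) (hG₂ : Gmap V₁ V₂ V₃ V₄ s₂ t₂ = 0)
    (htt : t₁ ≠ t₂)
    (p₁ q₁ p₂ q₂ : ℝ) (hp₁ : 0 < p₁) (hq₁ : 0 < q₁) (hp₂ : 0 < p₂) (hq₂ : 0 < q₂)
    (M₁ M₂ : Matrix (Fin 2) (Fin 2) ℝ)
    (hM₁ : M₁ = !![p₁ * (uvec V₁ V₂ V₃ V₄ t₁).1, q₁ * (vvec V₁ V₂ V₃ V₄ s₁).1;
                   p₁ * (uvec V₁ V₂ V₃ V₄ t₁).2, q₁ * (vvec V₁ V₂ V₃ V₄ s₁).2])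
    (hM₂ : M₂ = !![p₂ * (uvec V₁ V₂ V₃ V₄ t₂).1, q₂ * (vvec V₁ V₂ V₃ V₄ s₂).1;
                   p₂ * (uvec V₁ V₂ V₃ V₄ t₂).2, q₂ * (vvec V₁ V₂ V₃ V₄ s₂).2]) :
    ¬(AllEigRealPartNeg M₁ ∧ AllEigRealPartNeg M₂) :=
  stmt17_general V₁ V₂ V₃ V₄ s₁ t₁ s₂ t₂ hs₁ hs₂ hG₁ hG₂ htt p₁ q₁ p₂ q₂ hp₁ hq₁ hp₂ hq₂ M₁ M₂ hM₁
    hM₂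
end
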